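/- Let 𝓟 be a finite nonempty class of transitions and 𝓡 a finite nonempty class of mean-reward functions over a finite policy class Π, and let 𝓜 = 𝓟 × 𝓡. Then for every γ > 0 and every μ̄ ∈ Δ(𝓟), rfdec_γ(𝓜, μ̄) ≤ 2 · amdec_{γ/2}(𝓟, μ̄), where 𝓟 is regarded as a reward-free model class. Consequently sup_{μ̄∈Δ(𝓟)} rfdec_γ(𝓜, μ̄) ≤ 2 · sup_{μ̄∈Δ(𝓟)} amdec_{γ/2}(𝓟, μ̄). -/

import Mathlib

open MeasureTheory ProbabilityTheory

noncomputable section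

/-- Squared Hellinger distance between two measures, computed with respect to the
(dominating) measure `P + Q`. -/
def hellingerSq {Ω : Type*} [MeasurableSpace Ω] (P Q : Measure Ω) : ℝ :=
  ∫ x, (Real.sqrt ((P.rnDeriv (P + Q) x).toReal)
      - Real.sqrt ((Q.rnDeriv (P + Q) x).toReal)) ^ 2 ∂(P + Q)

/-- Total variation distance between two measures, computed with respect to the
(dominating) measure `P + Q`. -/
def tvDist {Ω : Type*} [MeasurableSpace Ω] (P Q : Measure Ω) : ℝ :=
  (1 / 2) * ∫ x, |(P.rnDeriv (P + Q) x).toReal - (Q.rnDeriv (P + Q) x).toReal| ∂(P + Q)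

/-- The set `Δ(ι)` of probability distributions on a finite set `ι`. -/
def ProbDist (ι : Type*) [Fintype ι] : Type _ :=
  {p : ι → ℝ // (∀ i, 0 ≤ p i) ∧ ∑ i, p i = 1}

variable {O : Type*} [MeasurableSpace O] {H : ℕ} {Pol : Type*} [Fintype Pol]
  {ιP : Type*} [Fintype ιP] {ιR : Type*} [Fintype ιR]

/-- The value `f^{P,R}(π)` of policy `π` in the model with transition `Trans p` and mean
reward `Rew r`. -/
def fval (Trans : ιP → Pol → Measure O) (Rew : ιR → O → Fin H → ℝ)
    (p : ιP) (r : ιR) (π : Pol) : ℝ :=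
  ∫ o, (∑ h, Rew r o h) ∂(Trans p π)

/-- The Reward-Free Decision-Estimation Coefficient `rfdec_γ(𝓜, μ̄)` of the class
`𝓜 = 𝓟 × 𝓡` with respect to `μ̄ ∈ Δ(𝓟)`; `πopt p r` denotes the optimal policy
`π_{P,R}`. -/
def rfdec (γ : ℝ) (Trans : ιP → Pol → Measure O) (Rew : ιR → O → Fin H → ℝ)
    (πopt : ιP → ιR → Pol) (μbar : ProbDist ιP) : ℝ :=
  ⨅ pexp : ProbDist Pol, ⨆ r : ιR, ⨅ pout : ProbDist Pol, ⨆ p : ιP,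
    (∑ π, pout.1 π * (fval Trans Rew p r (πopt p r) - fval Trans Rew p r π))
      - γ * ∑ π, pexp.1 π * ∑ q, μbar.1 q * hellingerSq (Trans p π) (Trans q π)

/-- The All-policy Model-estimation DEC `amdec_γ(𝓟, μ̄)` of the transition class `𝓟`,
regarded as a reward-free model class. -/
def amdecP (γ : ℝ) (Trans : ιP → Pol → Measure O) (μbar : ProbDist ιP) : ℝ :=
  ⨅ pexp : ProbDist Pol, ⨅ μout : ProbDist ιP, ⨆ p : ιP, ⨆ πbar : Pol,
    (∑ q, μout.1 q * tvDist (Trans p πbar) (Trans q πbar))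
      - γ * ∑ π, pexp.1 π * ∑ q, μbar.1 q * hellingerSq (Trans p π) (Trans q π)

section AuxMeasure

variable {Ω : Type*} [MeasurableSpace Ω]

lemma tvDist_nonneg' (P Q : Measure Ω) : 0 ≤ tvDist P Q :=
  mul_nonneg (by norm_num) (integral_nonneg fun _ => abs_nonneg _)

lemma hellingerSq_nonneg' (P Q : Measure Ω) : 0 ≤ hellingerSq P Q :=
  integral_nonneg fun _ => sq_nonneg _

lemma integral_toReal_rnDeriv_left (P Q : Measure Ω) [IsProbabilityMeasure P]
    [IsFiniteMeasure Q] : ∫ x, (P.rnDeriv (P + Q) x).toReal ∂(P + Q) = 1 := by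
  rw [Measure.integral_toReal_rnDeriv
    (Measure.absolutelyContinuous_of_le (Measure.le_add_right le_rfl))]
  simp

lemma integral_toReal_rnDeriv_right (P Q : Measure Ω) [IsFiniteMeasure P]
    [IsProbabilityMeasure Q] : ∫ x, (Q.rnDeriv (P + Q) x).toReal ∂(P + Q) = 1 := by
  rw [Measure.integral_toReal_rnDeriv
    (Measure.absolutelyContinuous_of_le (Measure.le_add_left le_rfl))]
  simp

lemma tvDist_le_one (P Q : Measure Ω) [IsProbabilityMeasure P] [IsProbabilityMeasure Q] :
    tvDist P Q ≤ 1 := by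
  have hip : Integrable (fun x => (P.rnDeriv (P + Q) x).toReal) (P + Q) :=
    Measure.integrable_toReal_rnDeriv
  have hiq : Integrable (fun x => (Q.rnDeriv (P + Q) x).toReal) (P + Q) :=
    Measure.integrable_toReal_rnDeriv
  have h : ∫ x, |(P.rnDeriv (P + Q) x).toReal - (Q.rnDeriv (P + Q) x).toReal| ∂(P + Q)
      ≤ ∫ x, ((P.rnDeriv (P + Q) x).toReal + (Q.rnDeriv (P + Q) x).toReal) ∂(P + Q) := by
    refine integral_mono_of_nonneg (ae_of_all _ fun x => abs_nonneg _) (hip.add hiq)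
      (ae_of_all _ fun x => ?_)
    have ha : (0:ℝ) ≤ (P.rnDeriv (P + Q) x).toReal := ENNReal.toReal_nonneg
    have hb : (0:ℝ) ≤ (Q.rnDeriv (P + Q) x).toReal := ENNReal.toReal_nonneg
    dsimp only
    rcases abs_cases ((P.rnDeriv (P + Q) x).toReal - (Q.rnDeriv (P + Q) x).toReal) with h' | h' <;>
      simp only [h'.1] <;> linarith
  rw [integral_add hip hiq, integral_toReal_rnDeriv_left, integral_toReal_rnDeriv_right] at h
  unfold tvDist
  linarith

lemma hellingerSq_le_two (P Q : Measure Ω) [IsProbabilityMeasure P] [IsProbabilityMeasure Q] :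
    hellingerSq P Q ≤ 2 := by
  have hip : Integrable (fun x => (P.rnDeriv (P + Q) x).toReal) (P + Q) :=
    Measure.integrable_toReal_rnDeriv
  have hiq : Integrable (fun x => (Q.rnDeriv (P + Q) x).toReal) (P + Q) :=
    Measure.integrable_toReal_rnDeriv
  have h : ∫ x, (Real.sqrt ((P.rnDeriv (P + Q) x).toReal)
        - Real.sqrt ((Q.rnDeriv (P + Q) x).toReal)) ^ 2 ∂(P + Q)
      ≤ ∫ x, ((P.rnDeriv (P + Q) x).toReal + (Q.rnDeriv (P + Q) x).toReal) ∂(P + Q) := by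
    refine integral_mono_of_nonneg (ae_of_all _ fun x => sq_nonneg _) (hip.add hiq)
      (ae_of_all _ fun x => ?_)
    have ha : (0:ℝ) ≤ (P.rnDeriv (P + Q) x).toReal := ENNReal.toReal_nonneg
    have hb : (0:ℝ) ≤ (Q.rnDeriv (P + Q) x).toReal := ENNReal.toReal_nonneg
    dsimp only
    have e : (Real.sqrt ((P.rnDeriv (P + Q) x).toReal)
          - Real.sqrt ((Q.rnDeriv (P + Q) x).toReal)) ^ 2
        = (P.rnDeriv (P + Q) x).toReal + (Q.rnDeriv (P + Q) x).toReal
          - 2 * (Real.sqrt ((P.rnDeriv (P + Q) x).toReal)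
              * Real.sqrt ((Q.rnDeriv (P + Q) x).toReal)) := by
      rw [sub_sq, Real.sq_sqrt ha, Real.sq_sqrt hb]; ring
    have hm : 0 ≤ Real.sqrt ((P.rnDeriv (P + Q) x).toReal)
        * Real.sqrt ((Q.rnDeriv (P + Q) x).toReal) :=
      mul_nonneg (Real.sqrt_nonneg _) (Real.sqrt_nonneg _)
    rw [e]; linarith
  rw [integral_add hip hiq, integral_toReal_rnDeriv_left, integral_toReal_rnDeriv_right] at h
  unfold hellingerSq
  linarith

lemma integrable_of_bdd01 (P : Measure Ω) [IsFiniteMeasure P] {g : Ω → ℝ}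
    (hg : Measurable g) (h0 : ∀ x, 0 ≤ g x) (h1 : ∀ x, g x ≤ 1) : Integrable g P :=
  (integrable_const 1).mono' hg.aestronglyMeasurable
    (ae_of_all _ fun x => by rw [Real.norm_eq_abs, abs_of_nonneg (h0 x)]; exact h1 x)

lemma integral_sub_le_tvDist (P Q : Measure Ω) [IsProbabilityMeasure P]
    [IsProbabilityMeasure Q] {g : Ω → ℝ} (hg : Measurable g)
    (h0 : ∀ x, 0 ≤ g x) (h1 : ∀ x, g x ≤ 1) :
    ∫ x, g x ∂P - ∫ x, g x ∂Q ≤ tvDist P Q := by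
  set μ := P + Q with hμdef
  have hP : P ≪ μ := Measure.absolutelyContinuous_of_le (Measure.le_add_right le_rfl)
  have hQ : Q ≪ μ := Measure.absolutelyContinuous_of_le (Measure.le_add_left le_rfl)
  set p : Ω → ℝ := fun x => (P.rnDeriv μ x).toReal with hpdef
  set q : Ω → ℝ := fun x => (Q.rnDeriv μ x).toReal with hqdef
  have hip : Integrable p μ := Measure.integrable_toReal_rnDeriv
  have hiq : Integrable q μ := Measure.integrable_toReal_rnDeriv
  have hgnorm : ∀ x, ‖g x‖ ≤ 1 := fun x => by
    rw [Real.norm_eq_abs, abs_of_nonneg (h0 x)]; exact h1 x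
  have hpg : Integrable (fun x => p x * g x) μ := by
    have := hip.bdd_mul hg.aestronglyMeasurable (ae_of_all _ hgnorm)
    simpa [mul_comm] using this
  have hqg : Integrable (fun x => q x * g x) μ := by
    have := hiq.bdd_mul hg.aestronglyMeasurable (ae_of_all _ hgnorm)
    simpa [mul_comm] using this
  have hgP : ∫ x, g x ∂P = ∫ x, p x * g x ∂μ := by
    rw [← integral_rnDeriv_smul hP (f := g)]
    simp only [smul_eq_mul]; rfl
  have hgQ : ∫ x, g x ∂Q = ∫ x, q x * g x ∂μ := by
    rw [← integral_rnDeriv_smul hQ (f := g)]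
    simp only [smul_eq_mul]; rfl
  have hpq : Integrable (fun x => p x - q x) μ := hip.sub hiq
  have hprod : Integrable (fun x => (g x - 1/2) * (p x - q x)) μ := by
    refine hpq.bdd_mul ((hg.sub measurable_const).aestronglyMeasurable) (c := 1/2) (ae_of_all _ fun x => ?_)
    rw [Real.norm_eq_abs, abs_le]
    constructor <;> [linarith [h0 x]; linarith [h1 x]]
  have hzero : ∫ x, (p x - q x) ∂μ = 0 := by
    rw [integral_sub hip hiq]
    have e1 : ∫ x, p x ∂μ = 1 := integral_toReal_rnDeriv_left P Q
    have e2 : ∫ x, q x ∂μ = 1 := integral_toReal_rnDeriv_right P Q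
    rw [e1, e2]; ring
  have hId : ∫ x, (g x - 1/2) * (p x - q x) ∂μ
      = ∫ x, p x * g x ∂μ - ∫ x, q x * g x ∂μ := by
    have h12 : Integrable (fun x => p x * g x - q x * g x) μ := by exact hpg.sub hqg
    have h3 : Integrable (fun x => (1/2 : ℝ) * (p x - q x)) μ := hpq.const_mul _
    calc ∫ x, (g x - 1/2) * (p x - q x) ∂μ
        = ∫ x, ((p x * g x - q x * g x) - (1/2) * (p x - q x)) ∂μ := by
          congr 1; funext x; ring
      _ = (∫ x, (p x * g x - q x * g x) ∂μ) - ∫ x, (1/2) * (p x - q x) ∂μ :=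
          integral_sub h12 h3
      _ = ∫ x, p x * g x ∂μ - ∫ x, q x * g x ∂μ := by
          rw [integral_sub hpg hqg, integral_const_mul, hzero]; ring
  have hmono : ∫ x, (g x - 1/2) * (p x - q x) ∂μ ≤ ∫ x, (1/2) * |p x - q x| ∂μ := by
    refine integral_mono hprod ((hpq.abs).const_mul _) fun x => ?_
    calc (g x - 1/2) * (p x - q x) ≤ |(g x - 1/2) * (p x - q x)| := le_abs_self _
      _ = |g x - 1/2| * |p x - q x| := abs_mul _ _
      _ ≤ (1/2) * |p x - q x| := by
          refine mul_le_mul_of_nonneg_right ?_ (abs_nonneg _)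
          rw [abs_le]; constructor <;> [linarith [h0 x]; linarith [h1 x]]
  rw [hgP, hgQ, ← hId]
  calc ∫ x, (g x - 1/2) * (p x - q x) ∂μ ≤ ∫ x, (1/2) * |p x - q x| ∂μ := hmono
    _ = tvDist P Q := by rw [integral_const_mul]; rfl

lemma integral_sub_le_tvDist' (P Q : Measure Ω) [IsProbabilityMeasure P]
    [IsProbabilityMeasure Q] {g : Ω → ℝ} (hg : Measurable g)
    (h0 : ∀ x, 0 ≤ g x) (h1 : ∀ x, g x ≤ 1) :
    ∫ x, g x ∂Q - ∫ x, g x ∂P ≤ tvDist P Q := by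
  have key := integral_sub_le_tvDist P Q (g := fun x => 1 - g x)
    (measurable_const.sub hg) (fun x => by linarith [h1 x])
    (fun x => by linarith [h0 x])
  have hgP : Integrable g P := integrable_of_bdd01 P hg h0 h1
  have hgQ : Integrable g Q := integrable_of_bdd01 Q hg h0 h1
  rw [integral_sub (integrable_const 1) hgP, integral_sub (integrable_const 1) hgQ] at key
  simp only [integral_const, measure_univ, probReal_univ, smul_eq_mul, one_mul] at key
  linarith

end AuxMeasure

section AuxProb

instance ProbDist.instNonempty {ι : Type*} [Fintype ι] [Nonempty ι] : Nonempty (ProbDist ι) :=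
  ⟨⟨fun _ => (Fintype.card ι : ℝ)⁻¹, fun _ => by positivity, by
    have h : (Fintype.card ι : ℝ) ≠ 0 := Nat.cast_ne_zero.mpr Fintype.card_ne_zero
    simp [Finset.sum_const, Finset.card_univ, nsmul_eq_mul, mul_inv_cancel₀ h]⟩⟩

/-- Dirac distribution at a point of a finite type. -/
def diracDist {ι : Type*} [Fintype ι] [DecidableEq ι] (i : ι) : ProbDist ι :=
  ⟨fun j => if j = i then 1 else 0, fun j => by dsimp only; split <;> norm_num, by simp⟩

lemma wsum_le {ι : Type*} [Fintype ι] {w f : ι → ℝ} {c : ℝ} (hw : ∀ i, 0 ≤ w i)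
    (hs : ∑ i, w i = 1) (hf : ∀ i, f i ≤ c) : ∑ i, w i * f i ≤ c := by
  calc ∑ i, w i * f i ≤ ∑ i, w i * c :=
        Finset.sum_le_sum fun i _ => mul_le_mul_of_nonneg_left (hf i) (hw i)
    _ = c := by rw [← Finset.sum_mul, hs, one_mul]

lemma wsum_nonneg {ι : Type*} [Fintype ι] {w f : ι → ℝ} (hw : ∀ i, 0 ≤ w i)
    (hf : ∀ i, 0 ≤ f i) : 0 ≤ ∑ i, w i * f i :=
  Finset.sum_nonneg fun i _ => mul_nonneg (hw i) (hf i)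

end AuxProb
/-- Proposition (rfdec-to-mdec): the Reward-Free DEC is bounded by twice the All-policy
Model-estimation DEC of the transition class at parameter `γ/2`, and similarly for the
suprema over reference distributions. -/
theorem rfdec_le_two_mul_amdec
    [Nonempty Pol] [Nonempty ιP] [Nonempty ιR] (hH : 1 ≤ H)
    (Trans : ιP → Pol → Measure O)
    (hTrans : ∀ p π, IsProbabilityMeasure (Trans p π))
    (Rew : ιR → O → Fin H → ℝ)
    (hRewMeas : ∀ r h, Measurable fun o => Rew r o h)
    (hRew_nonneg : ∀ r o h, 0 ≤ Rew r o h)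
    (hRew_le_one : ∀ r o h, Rew r o h ≤ 1)
    (hRew_sum : ∀ r o, ∑ h, Rew r o h ≤ 1)
    (πopt : ιP → ιR → Pol)
    (hπopt : ∀ p r π, fval Trans Rew p r π ≤ fval Trans Rew p r (πopt p r))
    (γ : ℝ) (hγ : 0 < γ) :
    (∀ μbar : ProbDist ιP,
        rfdec γ Trans Rew πopt μbar ≤ 2 * amdecP (γ / 2) Trans μbar)
    ∧ (⨆ μbar : ProbDist ιP, rfdec γ Trans Rew πopt μbar)
        ≤ 2 * ⨆ μbar : ProbDist ιP, amdecP (γ / 2) Trans μbar := by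
  classical
  -- basic facts about values and distances
  have hgmeas : ∀ r, Measurable (fun o => ∑ h, Rew r o h) :=
    fun r => Finset.measurable_sum _ fun h _ => hRewMeas r h
  have hg0 : ∀ r o, 0 ≤ ∑ h, Rew r o h :=
    fun r o => Finset.sum_nonneg fun h _ => hRew_nonneg r o h
  have hfd : ∀ p q r π, fval Trans Rew p r π - fval Trans Rew q r π
      ≤ tvDist (Trans p π) (Trans q π) := by
    intro p q r π
    haveI := hTrans p π; haveI := hTrans q π
    simpa [fval] using
      integral_sub_le_tvDist (Trans p π) (Trans q π) (hgmeas r) (hg0 r) (hRew_sum r)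
  have hfd' : ∀ p q r π, fval Trans Rew q r π - fval Trans Rew p r π
      ≤ tvDist (Trans p π) (Trans q π) := by
    intro p q r π
    haveI := hTrans p π; haveI := hTrans q π
    simpa [fval] using
      integral_sub_le_tvDist' (Trans p π) (Trans q π) (hgmeas r) (hg0 r) (hRew_sum r)
  have htv0 : ∀ p q π, 0 ≤ tvDist (Trans p π) (Trans q π) :=
    fun p q π => tvDist_nonneg' _ _
  have htv1 : ∀ p q π, tvDist (Trans p π) (Trans q π) ≤ 1 := by
    intro p q π
    haveI := hTrans p π; haveI := hTrans q π
    exact tvDist_le_one _ _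
  have hh0 : ∀ p q π, 0 ≤ hellingerSq (Trans p π) (Trans q π) :=
    fun p q π => hellingerSq_nonneg' _ _
  have hh2 : ∀ p q π, hellingerSq (Trans p π) (Trans q π) ≤ 2 := by
    intro p q π
    haveI := hTrans p π; haveI := hTrans q π
    exact hellingerSq_le_two _ _
  -- penalty bounds
  have hpen0 : ∀ (μbar : ProbDist ιP) (pexp : ProbDist Pol) (p : ιP),
      0 ≤ ∑ π, pexp.1 π * ∑ q, μbar.1 q * hellingerSq (Trans p π) (Trans q π) :=
    fun μbar pexp p => wsum_nonneg pexp.2.1 fun π => wsum_nonneg μbar.2.1 fun q => hh0 p q π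
  have hpen2 : ∀ (μbar : ProbDist ιP) (pexp : ProbDist Pol) (p : ιP),
      (∑ π, pexp.1 π * ∑ q, μbar.1 q * hellingerSq (Trans p π) (Trans q π)) ≤ 2 :=
    fun μbar pexp p => wsum_le pexp.2.1 pexp.2.2 fun π => wsum_le μbar.2.1 μbar.2.2
      fun q => hh2 p q π
  -- the main per-μbar bound
  have key : ∀ μbar : ProbDist ιP,
      rfdec γ Trans Rew πopt μbar ≤ 2 * amdecP (γ / 2) Trans μbar := by
    intro μbar
    -- lower bound on the inner rfdec expression
    have lb : ∀ (pexp pout : ProbDist Pol) (r : ιR) (p : ιP),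
        -(2*γ) ≤ (∑ π, pout.1 π * (fval Trans Rew p r (πopt p r) - fval Trans Rew p r π))
          - γ * ∑ π, pexp.1 π * ∑ q, μbar.1 q * hellingerSq (Trans p π) (Trans q π) := by
      intro pexp pout r p
      have h1 : 0 ≤ ∑ π, pout.1 π * (fval Trans Rew p r (πopt p r) - fval Trans Rew p r π) :=
        wsum_nonneg pout.2.1 fun π => sub_nonneg.mpr (hπopt p r π)
      have h2 : γ * (∑ π, pexp.1 π * ∑ q, μbar.1 q * hellingerSq (Trans p π) (Trans q π))
          ≤ γ * 2 := mul_le_mul_of_nonneg_left (hpen2 μbar pexp p) hγ.le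
      linarith
    have hub_sup : ∀ (pexp pout : ProbDist Pol) (r : ιR),
        -(2*γ) ≤ ⨆ p : ιP,
          ((∑ π, pout.1 π * (fval Trans Rew p r (πopt p r) - fval Trans Rew p r π))
            - γ * ∑ π, pexp.1 π * ∑ q, μbar.1 q * hellingerSq (Trans p π) (Trans q π)) :=
      fun pexp pout r => le_ciSup_of_le (Set.Finite.bddAbove (Set.finite_range _))
        (Classical.arbitrary ιP) (lb pexp pout r _)
    have hbdd2 : ∀ (pexp : ProbDist Pol) (r : ιR),
        BddBelow (Set.range fun pout : ProbDist Pol => ⨆ p : ιP,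
          ((∑ π, pout.1 π * (fval Trans Rew p r (πopt p r) - fval Trans Rew p r π))
            - γ * ∑ π, pexp.1 π * ∑ q, μbar.1 q * hellingerSq (Trans p π) (Trans q π))) :=
      fun pexp r => ⟨-(2*γ), by rintro x ⟨pout, rfl⟩; exact hub_sup pexp pout r⟩
    have hbdd1 : BddBelow (Set.range fun pexp : ProbDist Pol =>
        ⨆ r : ιR, ⨅ pout : ProbDist Pol, ⨆ p : ιP,
          ((∑ π, pout.1 π * (fval Trans Rew p r (πopt p r) - fval Trans Rew p r π))
            - γ * ∑ π, pexp.1 π * ∑ q, μbar.1 q * hellingerSq (Trans p π) (Trans q π))) := by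
      refine ⟨-(2*γ), ?_⟩
      rintro x ⟨pexp, rfl⟩
      exact le_ciSup_of_le (Set.Finite.bddAbove (Set.finite_range _))
        (Classical.arbitrary ιR) (le_ciInf fun pout => hub_sup pexp pout _)
    have main : ∀ (pexp : ProbDist Pol) (μout : ProbDist ιP),
        rfdec γ Trans Rew πopt μbar ≤ 2 * ⨆ p : ιP, ⨆ πbar : Pol,
          ((∑ q, μout.1 q * tvDist (Trans p πbar) (Trans q πbar))
            - γ / 2 * ∑ π, pexp.1 π * ∑ q, μbar.1 q
                * hellingerSq (Trans p π) (Trans q π)) := by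
      intro pexp μout
      have hAle : ∀ (p : ιP) (πb : Pol),
          ((∑ q, μout.1 q * tvDist (Trans p πb) (Trans q πb))
            - γ / 2 * ∑ π, pexp.1 π * ∑ q, μbar.1 q
                * hellingerSq (Trans p π) (Trans q π))
          ≤ ⨆ p : ιP, ⨆ πbar : Pol,
            ((∑ q, μout.1 q * tvDist (Trans p πbar) (Trans q πbar))
              - γ / 2 * ∑ π, pexp.1 π * ∑ q, μbar.1 q
                  * hellingerSq (Trans p π) (Trans q π)) :=
        fun p πb => by
          refine le_ciSup_of_le (Set.Finite.bddAbove (Set.finite_range _)) p ?_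
          exact le_ciSup (f := fun πbar : Pol =>
            (∑ q, μout.1 q * tvDist (Trans p πbar) (Trans q πbar))
              - γ / 2 * ∑ π, pexp.1 π * ∑ q, μbar.1 q
                  * hellingerSq (Trans p π) (Trans q π))
            (Set.Finite.bddAbove (Set.finite_range _)) πb
      unfold rfdec
      refine le_trans (ciInf_le hbdd1 pexp) ?_
      refine ciSup_le fun r => ?_
      obtain ⟨πt, -, hπt⟩ := Finset.exists_max_image Finset.univ
        (fun π => ∑ q, μout.1 q * fval Trans Rew q r π) Finset.univ_nonempty
      refine le_trans (ciInf_le (hbdd2 pexp r) (diracDist πt)) ?_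
      refine ciSup_le fun p => ?_
      have hsum : ∑ π, (diracDist πt).1 π
            * (fval Trans Rew p r (πopt p r) - fval Trans Rew p r π)
          = fval Trans Rew p r (πopt p r) - fval Trans Rew p r πt := by
        simp [diracDist, ite_mul]
      rw [hsum]
      have e1 : ∑ q, μout.1 q * (fval Trans Rew p r (πopt p r) - fval Trans Rew q r (πopt p r))
          = fval Trans Rew p r (πopt p r)
            - ∑ q, μout.1 q * fval Trans Rew q r (πopt p r) := by
        simp only [mul_sub]
        rw [Finset.sum_sub_distrib, ← Finset.sum_mul, μout.2.2, one_mul]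
      have h1 : fval Trans Rew p r (πopt p r)
            - (∑ q, μout.1 q * fval Trans Rew q r (πopt p r))
          ≤ ∑ q, μout.1 q * tvDist (Trans p (πopt p r)) (Trans q (πopt p r)) := by
        rw [← e1]
        exact Finset.sum_le_sum fun q _ =>
          mul_le_mul_of_nonneg_left (hfd p q r (πopt p r)) (μout.2.1 q)
      have e2 : ∑ q, μout.1 q * (fval Trans Rew q r πt - fval Trans Rew p r πt)
          = (∑ q, μout.1 q * fval Trans Rew q r πt) - fval Trans Rew p r πt := by
        simp only [mul_sub]
        rw [Finset.sum_sub_distrib, ← Finset.sum_mul, μout.2.2, one_mul]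
      have h2 : (∑ q, μout.1 q * fval Trans Rew q r πt) - fval Trans Rew p r πt
          ≤ ∑ q, μout.1 q * tvDist (Trans p πt) (Trans q πt) := by
        rw [← e2]
        exact Finset.sum_le_sum fun q _ =>
          mul_le_mul_of_nonneg_left (hfd' p q r πt) (μout.2.1 q)
      have h3 : ∑ q, μout.1 q * fval Trans Rew q r (πopt p r)
          ≤ ∑ q, μout.1 q * fval Trans Rew q r πt := hπt _ (Finset.mem_univ _)
      have h4 := hAle p (πopt p r)
      have h5 := hAle p πt
      linarith
    have half : rfdec γ Trans Rew πopt μbar / 2 ≤ amdecP (γ / 2) Trans μbar := by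
      unfold amdecP
      refine le_ciInf fun pexp => le_ciInf fun μout => ?_
      linarith [main pexp μout]
    linarith [half]
  refine ⟨key, ?_⟩
  -- uniform upper bound on amdecP, to get BddAbove
  have hub : ∀ μbar : ProbDist ιP, amdecP (γ / 2) Trans μbar ≤ 1 := by
    intro μbar
    have lbA : ∀ (pexp : ProbDist Pol) (μout : ProbDist ιP) (p : ιP) (πb : Pol),
        -γ ≤ (∑ q, μout.1 q * tvDist (Trans p πb) (Trans q πb))
          - γ / 2 * ∑ π, pexp.1 π * ∑ q, μbar.1 q * hellingerSq (Trans p π) (Trans q π) := by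
      intro pexp μout p πb
      have h1 : 0 ≤ ∑ q, μout.1 q * tvDist (Trans p πb) (Trans q πb) :=
        wsum_nonneg μout.2.1 fun q => htv0 p q πb
      have h3 : γ / 2 * (∑ π, pexp.1 π * ∑ q, μbar.1 q
            * hellingerSq (Trans p π) (Trans q π)) ≤ γ / 2 * 2 :=
        mul_le_mul_of_nonneg_left (hpen2 μbar pexp p) (by linarith)
      linarith
    have hb_inner : ∀ (pexp : ProbDist Pol) (μout : ProbDist ιP),
        -γ ≤ ⨆ p : ιP, ⨆ πbar : Pol,
          ((∑ q, μout.1 q * tvDist (Trans p πbar) (Trans q πbar))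
            - γ / 2 * ∑ π, pexp.1 π * ∑ q, μbar.1 q
                * hellingerSq (Trans p π) (Trans q π)) :=
      fun pexp μout => le_ciSup_of_le (Set.Finite.bddAbove (Set.finite_range _))
        (Classical.arbitrary ιP)
        (le_ciSup_of_le (Set.Finite.bddAbove (Set.finite_range _))
          (Classical.arbitrary Pol) (lbA pexp μout _ _))
    have hb2 : ∀ pexp : ProbDist Pol,
        BddBelow (Set.range fun μout : ProbDist ιP => ⨆ p : ιP, ⨆ πbar : Pol,
          ((∑ q, μout.1 q * tvDist (Trans p πbar) (Trans q πbar))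
            - γ / 2 * ∑ π, pexp.1 π * ∑ q, μbar.1 q
                * hellingerSq (Trans p π) (Trans q π))) :=
      fun pexp => ⟨-γ, by rintro x ⟨μout, rfl⟩; exact hb_inner pexp μout⟩
    have hb1 : BddBelow (Set.range fun pexp : ProbDist Pol =>
        ⨅ μout : ProbDist ιP, ⨆ p : ιP, ⨆ πbar : Pol,
          ((∑ q, μout.1 q * tvDist (Trans p πbar) (Trans q πbar))
            - γ / 2 * ∑ π, pexp.1 π * ∑ q, μbar.1 q
                * hellingerSq (Trans p π) (Trans q π))) :=
      ⟨-γ, by rintro x ⟨pexp, rfl⟩; exact le_ciInf fun μout => hb_inner pexp μout⟩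
    unfold amdecP
    refine le_trans (ciInf_le hb1 (Classical.arbitrary _)) ?_
    refine le_trans (ciInf_le (hb2 _) (Classical.arbitrary _)) ?_
    refine ciSup_le fun p => ciSup_le fun πb => ?_
    have h1 : (∑ q, (Classical.arbitrary (ProbDist ιP)).1 q
          * tvDist (Trans p πb) (Trans q πb)) ≤ 1 :=
      wsum_le (Classical.arbitrary (ProbDist ιP)).2.1
        (Classical.arbitrary (ProbDist ιP)).2.2 fun q => htv1 p q πb
    have h2 : 0 ≤ γ / 2 * ∑ π, (Classical.arbitrary (ProbDist Pol)).1 π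
        * ∑ q, μbar.1 q * hellingerSq (Trans p π) (Trans q π) :=
      mul_nonneg (by linarith) (hpen0 μbar (Classical.arbitrary _) p)
    linarith
  refine ciSup_le fun μbar => ?_
  have h1 := key μbar
  have h2 : amdecP (γ / 2) Trans μbar
      ≤ ⨆ μbar : ProbDist ιP, amdecP (γ / 2) Trans μbar :=
    le_ciSup ⟨1, by rintro x ⟨μb, rfl⟩; exact hub μb⟩ μbar
  linarith
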